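/- Let n, s, a1 be integers with 2 ≤ s < a1 ≤ n. Then the sum over all subsets A of {1,…,n} of cardinality a1 of the quantity (s − 1)/(T(A) − 1) equals (a1/n)·C(n, a1); equivalently, the average of w1(A) = (s − 1)/(T(A) − 1) over all such subsets A equals a1/n. (This is the second half of Theorem 1: E(w1) = a1/n, where w1 is the proportion of accepters among students with random number strictly lower than T.) -/

import Mathlib

/-- `kthSmallest A k` is the `k`-th smallest element of the finite set `A`
(so `kthSmallest A 1` is the minimum), obtained as entry `k - 1` of the
increasing enumeration of `A`. In the waiting-list model, for `s ≤ a1 = |A|`,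
`T(A) = kthSmallest A s` is the random number of the last student receiving
an offer, where `A` is the set of positions of accepters. -/
def kthSmallest (A : Finset ℕ) (k : ℕ) : ℕ :=
  (A.sort (· ≤ ·)).getD (k - 1) 0

/-!
Sort the `a1`-subsets `A` of `{1,…,n}` by `t = T(A)`: there are
`C(t-1, s-1) · C(n-t, a1-s)` of them (choose the `s - 1` accepters below `t` and the `a1 - s`
above it). Since `(s-1)/(t-1) · C(t-1, s-1) = C(t-2, s-2)`, the sum becomes
`∑ₜ C(t-2, s-2) · C(n-t, a1-s)`, which counts the `(a1-1)`-subsets of `{1,…,n-1}` by their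
`(s-1)`-th smallest element and therefore equals `C(n-1, a1-1) = (a1/n) · C(n, a1)`.
-/

open Finset

section

variable {α : Type*} [LinearOrder α] {A B C : Finset α} {t : α}

theorem insert_filter_lt_union_filter_gt (ht : t ∈ A) :
    insert t ({x ∈ A | x < t} ∪ {x ∈ A | t < x}) = A := by
  ext x
  simp only [mem_insert, mem_union, mem_filter]
  grind

theorem filter_lt_insert_union (hB : ∀ x ∈ B, x < t) (hC : ∀ x ∈ C, t < x) :
    {x ∈ insert t (B ∪ C) | x < t} = B := by
  ext x
  simp only [mem_insert, mem_union, mem_filter]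
  grind

theorem filter_gt_insert_union (hB : ∀ x ∈ B, x < t) (hC : ∀ x ∈ C, t < x) :
    {x ∈ insert t (B ∪ C) | t < x} = C := by
  ext x
  simp only [mem_insert, mem_union, mem_filter]
  grind

theorem card_insert_union_of_lt_of_gt (hB : ∀ x ∈ B, x < t) (hC : ∀ x ∈ C, t < x) :
    #(insert t (B ∪ C)) = #B + #C + 1 := by
  rw [card_insert_of_notMem, card_union_of_disjoint]
  · exact disjoint_left.2 fun x hxB hxC => (hB x hxB).asymm (hC x hxC)
  · simp only [mem_union, not_or]
    exact ⟨fun h => (hB t h).false, fun h => (hC t h).false⟩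

theorem card_filter_mem_and_card_filter_lt_eq {S : Finset α} (ht : t ∈ S) {a j : ℕ}
    (hja : j < a) :
    #{A ∈ S.powersetCard a | t ∈ A ∧ #{x ∈ A | x < t} = j}
      = (#{x ∈ S | x < t}).choose j * (#{x ∈ S | t < x}).choose (a - 1 - j) := by
  rw [← card_powersetCard, ← card_powersetCard, ← card_product]
  refine card_nbij' (fun A => ({x ∈ A | x < t}, {x ∈ A | t < x}))
    (fun p => insert t (p.1 ∪ p.2)) ?_ ?_ ?_ ?_
  · intro A hA
    simp only [coe_filter, mem_powersetCard, Set.mem_ofPred_eq, coe_product, Set.mem_prod,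
      mem_coe] at hA ⊢
    obtain ⟨⟨hAS, hAa⟩, htA, hlt⟩ := hA
    have hcard := card_insert_union_of_lt_of_gt (B := {x ∈ A | x < t}) (C := {x ∈ A | t < x})
      (fun x hx => (mem_filter.1 hx).2) (fun x hx => (mem_filter.1 hx).2)
    rw [insert_filter_lt_union_filter_gt htA] at hcard
    exact ⟨⟨filter_subset_filter _ hAS, hlt⟩, filter_subset_filter _ hAS, by omega⟩
  · intro p hp
    simp only [coe_filter, mem_powersetCard, Set.mem_ofPred_eq, coe_product, Set.mem_prod,
      mem_coe] at hp ⊢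
    obtain ⟨⟨hBS, hBj⟩, hCS, hCc⟩ := hp
    have hB : ∀ x ∈ p.1, x < t := fun x hx => (mem_filter.1 (hBS hx)).2
    have hC : ∀ x ∈ p.2, t < x := fun x hx => (mem_filter.1 (hCS hx)).2
    have hsub : insert t (p.1 ∪ p.2) ⊆ S :=
      insert_subset ht <|
        union_subset (hBS.trans (filter_subset _ _)) (hCS.trans (filter_subset _ _))
    refine ⟨⟨hsub, ?_⟩, mem_insert_self _ _, by rw [filter_lt_insert_union hB hC, hBj]⟩
    rw [card_insert_union_of_lt_of_gt hB hC]
    omega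
  · intro A hA
    exact insert_filter_lt_union_filter_gt (mem_filter.1 hA).2.1
  · intro p hp
    simp only [mem_powersetCard, coe_product, Set.mem_prod, mem_coe] at hp
    have hB : ∀ x ∈ p.1, x < t := fun x hx => (mem_filter.1 (hp.1.1 hx)).2
    have hC : ∀ x ∈ p.2, t < x := fun x hx => (mem_filter.1 (hp.2.1 hx)).2
    exact Prod.ext (filter_lt_insert_union hB hC) (filter_gt_insert_union hB hC)
end

theorem kthSmallest_eq_nth (A : Finset ℕ) (k : ℕ) :
    kthSmallest A k = Nat.nth (· ∈ A) (k - 1) := by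
  rw [Nat.nth_eq_getD_sort (p := (· ∈ A)) A.finite_toSet]
  simp [kthSmallest]

theorem Nat.count_mem_eq_card_filter_lt (A : Finset ℕ) (t : ℕ) :
    Nat.count (· ∈ A) t = #{x ∈ A | x < t} := by
  rw [Nat.count_eq_card_filter_range]
  congr 1
  ext
  simp [and_comm]

theorem kthSmallest_eq_iff {A : Finset ℕ} {k t : ℕ} (hk : k ≠ 0) (hkA : k ≤ #A) :
    kthSmallest A k = t ↔ t ∈ A ∧ #{x ∈ A | x < t} = k - 1 := by
  have hlt : k - 1 < #(A.finite_toSet.toFinset) := by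
    rw [finite_toSet_toFinset]
    omega
  rw [kthSmallest_eq_nth, ← Nat.count_mem_eq_card_filter_lt]
  constructor
  · rintro rfl
    exact ⟨Nat.nth_mem_of_lt_card _ hlt, Nat.count_nth_of_lt_card_finite _ hlt⟩
  · rintro ⟨htA, hcount⟩
    rw [← hcount]
    exact Nat.nth_count htA

theorem card_filter_kthSmallest_eq {n a k t : ℕ} (hk : k ≠ 0) (hka : k ≤ a)
    (ht : t ∈ Icc 1 n) :
    #{A ∈ (Icc 1 n).powersetCard a | kthSmallest A k = t}
      = (t - 1).choose (k - 1) * (n - t).choose (a - k) := by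
  have hlt : {x ∈ Icc 1 n | x < t} = Ico 1 t := by ext; simp at ht ⊢; omega
  have hgt : {x ∈ Icc 1 n | t < x} = Ioc t n := by ext; simp at ht ⊢; omega
  rw [filter_congr fun A hA => kthSmallest_eq_iff hk (hka.trans (mem_powersetCard.1 hA).2.ge),
    card_filter_mem_and_card_filter_lt_eq ht (by omega), hlt, hgt, Nat.card_Ico, Nat.card_Ioc,
    Nat.sub_sub, Nat.add_sub_cancel' (Nat.one_le_iff_ne_zero.2 hk)]

theorem kthSmallest_mem_Icc {n a k : ℕ} {A : Finset ℕ} (hA : A ∈ (Icc 1 n).powersetCard a)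
    (hk : k ≠ 0) (hka : k ≤ a) : kthSmallest A k ∈ Icc 1 n := by
  have hkA : k ≤ #A := hka.trans (mem_powersetCard.1 hA).2.ge
  exact (mem_powersetCard.1 hA).1 ((kthSmallest_eq_iff hk hkA).1 rfl).1

theorem sum_Icc_one_eq_sum_range {M : Type*} [AddCommMonoid M] (f : ℕ → M) (n : ℕ) :
    ∑ t ∈ Icc 1 n, f t = ∑ i ∈ range n, f (i + 1) := by
  rw [range_eq_Ico, sum_Ico_add' f 0 n 1, zero_add, Ico_add_one_right_eq_Icc]

theorem sum_powersetCard_kthSmallest {M : Type*} [AddCommMonoid M] (f : ℕ → M) {n a k : ℕ}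
    (hk : k ≠ 0) (hka : k ≤ a) :
    ∑ A ∈ (Icc 1 n).powersetCard a, f (kthSmallest A k)
      = ∑ i ∈ range n, (i.choose (k - 1) * (n - (i + 1)).choose (a - k)) • f (i + 1) := by
  rw [← sum_fiberwise_of_maps_to' fun A hA => kthSmallest_mem_Icc hA hk hka,
    sum_Icc_one_eq_sum_range]
  refine sum_congr rfl fun i hi => ?_
  rw [sum_const, card_filter_kthSmallest_eq hk hka (by simpa using hi), Nat.add_sub_cancel]

theorem sum_range_choose_mul_choose {n a k : ℕ} (hk : k ≠ 0) (hka : k ≤ a) :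
    ∑ i ∈ range n, i.choose (k - 1) * (n - (i + 1)).choose (a - k) = n.choose a := by
  have := sum_powersetCard_kthSmallest (fun _ => 1) hk hka (n := n)
  simp only [sum_const, card_powersetCard, Nat.card_Icc, smul_eq_mul, mul_one,
    Nat.add_sub_cancel] at this
  exact this.symm

theorem Nat.cast_choose_succ_mul_div {K : Type*} [Field K] [CharZero K] (n k : ℕ) :
    ((n + 1).choose (k + 1) : K) * ((k + 1) / (n + 1)) = n.choose k := by
  have := Nat.add_one_mul_choose_eq n k
  field_simp
  exact_mod_cast this.symm

theorem expectation_w1_general (n s a1 : ℕ) (hs : 2 ≤ s) (hsa : s < a1) :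
    ∑ A ∈ (Finset.Icc 1 n).powersetCard a1,
      ((s : ℚ) - 1) / ((kthSmallest A s : ℚ) - 1)
      = ((a1 : ℚ) / (n : ℚ)) * (n.choose a1 : ℚ) := by
  rcases n with _ | m
  · rw [powersetCard_eq_empty.2 (by simp; omega)]
    simp
  obtain ⟨j, rfl⟩ : ∃ j, s = j + 1 + 1 := ⟨s - 2, by omega⟩
  obtain ⟨b, rfl⟩ : ∃ b, a1 = b + 1 := ⟨a1 - 1, by omega⟩
  have hterm (i c : ℕ) : ((i + 1).choose (j + 1) * c) •
      ((((j + 1 + 1 : ℕ) : ℚ) - 1) / (((i + 1 + 1 : ℕ) : ℚ) - 1)) =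
        ((i.choose j * c : ℕ) : ℚ) := by
    rw [nsmul_eq_mul]
    push_cast
    rw [add_sub_cancel_right, add_sub_cancel_right, mul_right_comm, Nat.cast_choose_succ_mul_div]
  have hsum := sum_range_choose_mul_choose (n := m) (k := j + 1) (a := b) (by omega) (by omega)
  rw [Nat.add_sub_cancel] at hsum
  rw [sum_powersetCard_kthSmallest (fun t => (((j + 1 + 1 : ℕ) : ℚ) - 1) / ((t : ℚ) - 1))
    (by omega) hsa.le, sum_range_succ']
  simp only [Nat.add_sub_cancel, Nat.add_sub_add_right, Nat.choose_zero_succ, zero_mul, zero_smul,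
    add_zero, hterm]
  rw [← Nat.cast_sum, hsum, ← Nat.cast_choose_succ_mul_div]
  push_cast
  ring

/-- **Theorem 1, second half: E(w₁) = a1/n.**
For integers `2 ≤ s < a1 ≤ n`, the sum over all subsets `A` of `{1,…,n}` of
cardinality `a1` of `w₁(A) = (s − 1)/(T(A) − 1)` (the proportion of accepters
among students with random number strictly lower than `T(A)`) equals
`(a1/n)·C(n, a1)`; i.e. the average of `w₁` over all such subsets is `a1/n`. -/
theorem expectation_w1 (n s a1 : ℕ) (hs : 2 ≤ s) (hsa : s < a1) (han : a1 ≤ n) :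
    ∑ A ∈ (Finset.Icc 1 n).powersetCard a1,
      ((s : ℚ) - 1) / ((kthSmallest A s : ℚ) - 1)
      = ((a1 : ℚ) / (n : ℚ)) * (n.choose a1 : ℚ) :=
  expectation_w1_general n s a1 hs hsa
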